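/- Let κ > 0, φ > 0 and ν > 4, and set γ_k = (2^k · ν(ν−1)⋯(ν−k+1))^{−1} = (2^k ∏_{i=0}^{k−1}(ν−i))^{−1}. Then for every h = (h₁,h₂) ∈ ℝ² with h ≠ 0, the fourth partial derivative of the Matérn covariance function with respect to the first coordinate satisfies ∂⁴C_κ^ν/∂h₁⁴ (h) = 3γ₂·C_κ^{ν−2}(h) − 6γ₃·h₁²·C_κ^{ν−3}(h) + γ₄·h₁⁴·C_κ^{ν−4}(h). (This is the covariance function of Example 3 with b₁ = b₂ = 0 and B₁ = B₂ = (1,0)^⊤: applying the operator (−∂₁²)(−∂₁²) = ∂₁⁴ to the Matérn covariance yields the stated oscillating covariance function.) -/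

import Mathlib

open Real

/-- The modified Bessel function of the second kind,
`K_ν(x) = ∫₀^∞ exp(−x cosh t) cosh(νt) dt`. -/
noncomputable def besselK (ν x : ℝ) : ℝ :=
  ∫ t in Set.Ioi (0 : ℝ), Real.exp (-x * Real.cosh t) * Real.cosh (ν * t)

/-- The Matérn covariance function on `ℝ²` with scale `κ`, variance parameter `φ²` and
shape parameter `ν`:
`C_κ^ν(h) = (2^{1−ν}φ²/(4π Γ(ν+1) κ^{2ν})) (κ‖h‖)^ν K_ν(κ‖h‖)`. -/
noncomputable def matern (κ φ ν : ℝ) (h : EuclideanSpace ℝ (Fin 2)) : ℝ :=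
  2 ^ (1 - ν) * φ ^ 2 / (4 * π * Real.Gamma (ν + 1) * κ ^ (2 * ν)) *
    (κ * ‖h‖) ^ ν * besselK ν (κ * ‖h‖)

/-- The partial derivative of `g : ℝ² → ℝ` in the `i`-th coordinate direction. -/
noncomputable def pderiv2 (i : Fin 2) (g : EuclideanSpace ℝ (Fin 2) → ℝ) :
    EuclideanSpace ℝ (Fin 2) → ℝ :=
  fun x => fderiv ℝ g x (EuclideanSpace.single i 1)


/-!
Away from the origin the Matérn covariance is a smooth radial function, and its gradient is
`∇C_κ^μ(h) = -(2μ)⁻¹ C_κ^{μ-1}(h) h`. This comes from the Bessel identity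
`(x^μ K_μ(x))' = -x^μ K_{μ-1}(x)`, which combines `K_μ' = -(K_{μ-1} + K_{μ+1}) / 2`
(differentiation under the integral sign) with `K_{μ+1} - K_{μ-1} = (2μ/x) K_μ` (integration by
parts), together with `Γ(μ+1) = μ Γ(μ)` for the normalising constants. Consequently
`∂₁(h₁^k C^μ) = k h₁^{k-1} C^μ - (2μ)⁻¹ h₁^{k+1} C^{μ-1}`, and four applications of this rule
produce the stated combination of `C^{ν-2}`, `C^{ν-3}` and `C^{ν-4}`.
-/

open MeasureTheory Set Filter Topology

lemma exp_mul_sub_mul_cosh_le {a : ℝ} (ha : 0 < a) (b : ℝ) {t : ℝ} (ht : 0 ≤ t) :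
    exp (b * t - a * cosh t) ≤ exp ((b + 1) ^ 2 / a) * exp (-t) := by
  rw [← exp_add, exp_le_exp]
  -- `cosh t ≥ exp t / 2 ≥ t ^ 2 / 4`, and `(b + 1) t - a t ^ 2 / 4 ≤ (b + 1) ^ 2 / a`
  have hcosh : t ^ 2 / 4 ≤ cosh t := by
    rw [cosh_eq]
    nlinarith [quadratic_le_exp_of_nonneg ht, exp_pos (-t)]
  have hsq : 0 ≤ (a * t / 2 - (b + 1)) ^ 2 / a := by positivity
  have hexpand : (a * t / 2 - (b + 1)) ^ 2 / a
      = a * t ^ 2 / 4 - (b + 1) * t + (b + 1) ^ 2 / a := by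
    field_simp
    ring
  nlinarith [mul_le_mul_of_nonneg_left hcosh ha.le]

lemma integrableOn_exp_mul_sub_mul_cosh {a : ℝ} (ha : 0 < a) (b : ℝ) :
    IntegrableOn (fun t => exp (b * t - a * cosh t)) (Ioi 0) := by
  refine ((integrableOn_exp_neg_Ioi 0).const_mul (exp ((b + 1) ^ 2 / a))).mono'
    (by fun_prop) ?_
  refine (ae_restrict_iff' measurableSet_Ioi).2 (ae_of_all _ fun t ht => ?_)
  rw [norm_of_nonneg (exp_pos _).le]
  exact exp_mul_sub_mul_cosh_le ha b (le_of_lt ht)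

lemma tendsto_exp_mul_sub_mul_cosh_atTop {a : ℝ} (ha : 0 < a) (b : ℝ) :
    Tendsto (fun t => exp (b * t - a * cosh t)) atTop (𝓝 0) := by
  have hdom : Tendsto (fun t => exp ((b + 1) ^ 2 / a) * exp (-t)) atTop (𝓝 0) := by
    simpa using (tendsto_exp_neg_atTop_nhds_zero).const_mul (exp ((b + 1) ^ 2 / a))
  refine squeeze_zero' (Eventually.of_forall fun t => (exp_pos _).le) ?_ hdom
  filter_upwards [eventually_ge_atTop 0] with t ht
  exact exp_mul_sub_mul_cosh_le ha b ht

lemma abs_cosh_le_exp_abs (u : ℝ) : |cosh u| ≤ exp |u| := by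
  rw [abs_of_pos (cosh_pos u), ← cosh_abs, cosh_eq]
  linarith [exp_le_exp.2 (neg_le_self (abs_nonneg u))]

lemma abs_sinh_le_exp_abs (u : ℝ) : |sinh u| ≤ exp |u| := by
  refine le_trans ?_ (abs_cosh_le_exp_abs u)
  rw [abs_of_pos (cosh_pos u), abs_le]
  constructor
  · linarith [sinh_neg u ▸ cosh_neg u ▸ sinh_lt_cosh (-u)]
  · exact (sinh_lt_cosh u).le

lemma abs_mul_le_exp_of_abs_le {f g : ℝ → ℝ} {a b : ℝ} (hf : ∀ t, |f t| ≤ exp (a * |t|))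
    (hg : ∀ t, |g t| ≤ exp (b * |t|)) (t : ℝ) : |f t * g t| ≤ exp ((a + b) * |t|) := by
  rw [abs_mul, add_mul, exp_add]
  exact mul_le_mul (hf t) (hg t) (abs_nonneg _) (exp_pos _).le

lemma integrableOn_exp_neg_mul_cosh_mul {x b : ℝ} (hx : 0 < x) {g : ℝ → ℝ} (hg : Continuous g)
    (hgb : ∀ t, |g t| ≤ exp (b * |t|)) :
    IntegrableOn (fun t => exp (-x * cosh t) * g t) (Ioi 0) := by
  refine (integrableOn_exp_mul_sub_mul_cosh hx b).mono' (by fun_prop) ?_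
  refine (ae_restrict_iff' measurableSet_Ioi).2 (ae_of_all _ fun t ht => ?_)
  rw [norm_mul, norm_of_nonneg (exp_pos _).le, Real.norm_eq_abs, sub_eq_add_neg, exp_add,
    mul_comm, neg_mul]
  have hgt := hgb t
  rw [abs_of_pos (mem_Ioi.1 ht)] at hgt
  exact mul_le_mul_of_nonneg_right hgt (exp_pos _).le

lemma integrableOn_besselK_integrand {x : ℝ} (hx : 0 < x) (ν : ℝ) :
    IntegrableOn (fun t => exp (-x * cosh t) * cosh (ν * t)) (Ioi 0) :=
  integrableOn_exp_neg_mul_cosh_mul hx (by fun_prop) fun t => by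
    simpa only [abs_mul] using abs_cosh_le_exp_abs (ν * t)

lemma integrableOn_cosh_mul_besselK_integrand {x : ℝ} (hx : 0 < x) (ν : ℝ) :
    IntegrableOn (fun t => exp (-x * cosh t) * (cosh t * cosh (ν * t))) (Ioi 0) :=
  integrableOn_exp_neg_mul_cosh_mul hx (by fun_prop) <|
    abs_mul_le_exp_of_abs_le (a := 1) (by simpa using abs_cosh_le_exp_abs) fun t => by
      simpa only [abs_mul] using abs_cosh_le_exp_abs (ν * t)

lemma integrableOn_sinh_mul_sinh_besselK_integrand {x : ℝ} (hx : 0 < x) (ν : ℝ) :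
    IntegrableOn (fun t => exp (-x * cosh t) * (sinh t * sinh (ν * t))) (Ioi 0) :=
  integrableOn_exp_neg_mul_cosh_mul hx (by fun_prop) <|
    abs_mul_le_exp_of_abs_le (a := 1) (by simpa using abs_sinh_le_exp_abs) fun t => by
      simpa only [abs_mul] using abs_sinh_le_exp_abs (ν * t)

lemma besselK_add_one_add_besselK_sub_one {x : ℝ} (hx : 0 < x) (ν : ℝ) :
    besselK (ν + 1) x + besselK (ν - 1) x
      = 2 * ∫ t in Ioi 0, exp (-x * cosh t) * (cosh t * cosh (ν * t)) := by
  rw [besselK, besselK, ← integral_add (integrableOn_besselK_integrand hx _)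
    (integrableOn_besselK_integrand hx _), ← integral_const_mul]
  congr 1 with t
  rw [add_mul, sub_mul, one_mul, cosh_add, cosh_sub]
  ring

lemma besselK_add_one_sub_besselK_sub_one_eq_integral {x : ℝ} (hx : 0 < x) (ν : ℝ) :
    besselK (ν + 1) x - besselK (ν - 1) x
      = 2 * ∫ t in Ioi 0, exp (-x * cosh t) * (sinh t * sinh (ν * t)) := by
  rw [besselK, besselK, ← integral_sub (integrableOn_besselK_integrand hx _)
    (integrableOn_besselK_integrand hx _), ← integral_const_mul]
  congr 1 with t
  rw [add_mul, sub_mul, one_mul, cosh_add, cosh_sub]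
  ring

lemma hasDerivAt_besselK_integral {x : ℝ} (hx : 0 < x) (ν : ℝ) :
    HasDerivAt (besselK ν) (-∫ t in Ioi 0, exp (-x * cosh t) * (cosh t * cosh (ν * t))) x := by
  have hball : Metric.ball x (x / 2) ∈ 𝓝 x := Metric.ball_mem_nhds x (by positivity)
  have key := hasDerivAt_integral_of_dominated_loc_of_deriv_le (μ := volume.restrict (Ioi 0))
    (F := fun y t => exp (-y * cosh t) * cosh (ν * t))
    (F' := fun y t => -(exp (-y * cosh t) * (cosh t * cosh (ν * t))))
    (bound := fun t => exp (-(x / 2) * cosh t) * (cosh t * cosh (ν * t))) hball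
    (Eventually.of_forall fun y => by fun_prop) (integrableOn_besselK_integrand hx ν)
    (by fun_prop) ?bound (integrableOn_cosh_mul_besselK_integrand (by positivity) ν) ?deriv
  · rw [← integral_neg]
    exact key.2
  case bound =>
    refine ae_of_all _ fun t y hy => ?_
    have hxy : x / 2 < y := by
      have := (abs_lt.1 (Real.dist_eq y x ▸ Metric.mem_ball.1 hy)).1
      linarith
    rw [norm_neg, norm_of_nonneg (by positivity)]
    gcongr
  case deriv =>
    refine ae_of_all _ fun t y _ => ?_
    exact (((hasDerivAt_neg y).mul_const (cosh t)).exp.mul_const (cosh (ν * t))).congr_deriv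
      (by ring)

lemma hasDerivAt_besselK {x : ℝ} (hx : 0 < x) (ν : ℝ) :
    HasDerivAt (besselK ν) (-(besselK (ν - 1) x + besselK (ν + 1) x) / 2) x := by
  convert hasDerivAt_besselK_integral hx ν using 1
  rw [add_comm, besselK_add_one_add_besselK_sub_one hx]
  ring

lemma besselK_add_one_sub_besselK_sub_one {x : ℝ} (hx : 0 < x) (ν : ℝ) :
    besselK (ν + 1) x - besselK (ν - 1) x = 2 * ν / x * besselK ν x := by
  -- integrate `d/dt (exp (-x cosh t) sinh (ν t))` over `(0, ∞)`
  set F : ℝ → ℝ := fun t => exp (-x * cosh t) * sinh (ν * t)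
  have hF' : ∀ t, HasDerivAt F (ν * (exp (-x * cosh t) * cosh (ν * t))
      - x * (exp (-x * cosh t) * (sinh t * sinh (ν * t)))) t := fun t =>
    (((hasDerivAt_cosh t).const_mul (-x)).exp.mul
      ((hasDerivAt_id' t).const_mul ν).sinh).congr_deriv (by ring)
  have hlim : Tendsto F atTop (𝓝 0) := by
    refine squeeze_zero_norm' ?_ (tendsto_exp_mul_sub_mul_cosh_atTop hx |ν|)
    filter_upwards [eventually_ge_atTop 0] with t ht
    rw [Real.norm_eq_abs, abs_mul, abs_of_pos (exp_pos _), sub_eq_add_neg, exp_add, mul_comm,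
      neg_mul]
    gcongr
    simpa only [abs_mul, abs_of_nonneg ht] using abs_sinh_le_exp_abs (ν * t)
  have hibp := integral_Ioi_of_hasDerivAt_of_tendsto' (fun t _ => hF' t)
    (((integrableOn_besselK_integrand hx ν).const_mul ν).sub
      ((integrableOn_sinh_mul_sinh_besselK_integrand hx ν).const_mul x)) hlim
  rw [integral_sub ((integrableOn_besselK_integrand hx ν).const_mul ν)
      ((integrableOn_sinh_mul_sinh_besselK_integrand hx ν).const_mul x), integral_const_mul,
    integral_const_mul] at hibp
  simp only [F, mul_zero, sinh_zero, sub_zero] at hibp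
  rw [besselK_add_one_sub_besselK_sub_one_eq_integral hx, besselK, div_mul_eq_mul_div,
    eq_div_iff hx.ne']
  linear_combination (-2) * hibp

lemma hasDerivAt_rpow_mul_besselK {x : ℝ} (hx : 0 < x) (ν : ℝ) :
    HasDerivAt (fun y => y ^ ν * besselK ν y) (-(x ^ ν * besselK (ν - 1) x)) x := by
  refine ((hasDerivAt_rpow_const (p := ν) (Or.inl hx.ne')).mul
    (hasDerivAt_besselK hx ν)).congr_deriv ?_
  rw [eq_add_of_sub_eq (besselK_add_one_sub_besselK_sub_one hx ν), rpow_sub hx, rpow_one]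
  field_simp
  ring

lemma hasFDerivAt_norm_of_ne_zero {F : Type*} [NormedAddCommGroup F] [InnerProductSpace ℝ F]
    {x : F} (hx : x ≠ 0) : HasFDerivAt (fun y : F => ‖y‖) (‖x‖⁻¹ • innerSL ℝ x) x := by
  have hsq : ‖x‖ ^ 2 ≠ 0 := by positivity
  refine (((hasStrictFDerivAt_norm_sq x).hasFDerivAt.sqrt hsq).congr_of_eventuallyEq
    (Eventually.of_forall fun y => (sqrt_sq (norm_nonneg y)).symm)).congr_fderiv ?_
  rw [sqrt_sq (norm_nonneg x), ← Nat.cast_smul_eq_nsmul ℝ, smul_smul]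
  congr 1
  field_simp
  norm_num

notation "E2" => EuclideanSpace ℝ (Fin 2)

noncomputable def maternCoeff (κ φ ν : ℝ) : ℝ :=
  2 ^ (1 - ν) * φ ^ 2 / (4 * π * Real.Gamma (ν + 1) * κ ^ (2 * ν))

lemma matern_eq_maternCoeff_mul (κ φ ν : ℝ) (h : E2) :
    matern κ φ ν h = maternCoeff κ φ ν * ((κ * ‖h‖) ^ ν * besselK ν (κ * ‖h‖)) := by
  rw [matern, maternCoeff, mul_assoc]

lemma maternCoeff_sub_one {κ : ℝ} (hκ : 0 < κ) (φ : ℝ) {ν : ℝ} (hν : 0 < ν) :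
    maternCoeff κ φ (ν - 1) = 2 * ν * κ ^ 2 * maternCoeff κ φ ν := by
  have hΓ : Real.Gamma ν ≠ 0 := (Real.Gamma_pos_of_pos hν).ne'
  have hκν : κ ^ (2 * ν) ≠ 0 := (rpow_pos_of_pos hκ _).ne'
  simp only [maternCoeff, sub_add_cancel, Real.Gamma_add_one hν.ne',
    show 1 - (ν - 1) = (1 - ν) + 1 by ring, show 2 * (ν - 1) = 2 * ν - 2 by ring,
    rpow_add_one two_ne_zero, rpow_sub hκ, rpow_two]
  field_simp

lemma hasFDerivAt_matern {κ : ℝ} (hκ : 0 < κ) (φ : ℝ) {μ : ℝ} (hμ : 0 < μ) {x : E2}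
    (hx : x ≠ 0) :
    HasFDerivAt (matern κ φ μ) ((-(2 * μ)⁻¹ * matern κ φ (μ - 1) x) • innerSL ℝ x) x := by
  have hr : 0 < κ * ‖x‖ := mul_pos hκ (norm_pos_iff.2 hx)
  have hψ := ((hasDerivAt_rpow_mul_besselK hr μ).comp_hasFDerivAt x
    ((hasFDerivAt_norm_of_ne_zero hx).const_mul κ)).const_mul (maternCoeff κ φ μ)
  rw [show matern κ φ μ = _ from funext (matern_eq_maternCoeff_mul κ φ μ)]
  refine hψ.congr_fderiv ?_
  rw [matern_eq_maternCoeff_mul, maternCoeff_sub_one hκ φ hμ, rpow_sub_one hr.ne']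
  ext v
  simp only [FunLike.coe_smul, Pi.smul_apply, smul_eq_mul]
  field_simp

lemma eqOn_iterate_pderiv2_succ {i : Fin 2} {s : Set E2} (hs : IsOpen s) {f g g' : E2 → ℝ}
    {n : ℕ} (hfg : EqOn ((pderiv2 i)^[n] f) g s) (hgg' : EqOn (pderiv2 i g) g' s) :
    EqOn ((pderiv2 i)^[n + 1] f) g' s := by
  intro x hx
  rw [Function.iterate_succ_apply', ← hgg' hx, pderiv2, pderiv2,
    (hfg.eventuallyEq_of_mem (hs.mem_nhds hx)).fderiv_eq]

lemma pderiv2_add {i : Fin 2} {f g : E2 → ℝ} {x : E2} (hf : DifferentiableAt ℝ f x)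
    (hg : DifferentiableAt ℝ g x) :
    pderiv2 i (fun y => f y + g y) x = pderiv2 i f x + pderiv2 i g x := by
  rw [pderiv2, show (fun y => f y + g y) = f + g from rfl, fderiv_add hf hg]
  rfl

lemma pderiv2_const_mul {i : Fin 2} {f : E2 → ℝ} {x : E2} (hf : DifferentiableAt ℝ f x)
    (a : ℝ) : pderiv2 i (fun y => a * f y) x = a * pderiv2 i f x := by
  rw [pderiv2, (hf.hasFDerivAt.const_mul a).fderiv]
  rfl

noncomputable def maternMonomial (κ φ : ℝ) (k : ℕ) (μ : ℝ) (h : E2) : ℝ :=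
  h 0 ^ k * matern κ φ μ h

lemma maternMonomial_zero (κ φ μ : ℝ) : maternMonomial κ φ 0 μ = matern κ φ μ := by
  funext h
  rw [maternMonomial, pow_zero, one_mul]

lemma hasFDerivAt_maternMonomial {κ : ℝ} (hκ : 0 < κ) (φ : ℝ) {μ : ℝ} (hμ : 0 < μ) (k : ℕ)
    {x : E2} (hx : x ≠ 0) :
    HasFDerivAt (maternMonomial κ φ k μ)
      (x 0 ^ k • ((-(2 * μ)⁻¹ * matern κ φ (μ - 1) x) • innerSL ℝ x)
        + matern κ φ μ x • ((k * x 0 ^ (k - 1)) • EuclideanSpace.proj 0)) x :=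
  ((hasDerivAt_pow k (x 0)).comp_hasFDerivAt x
    (EuclideanSpace.proj (𝕜 := ℝ) (0 : Fin 2)).hasFDerivAt).mul (hasFDerivAt_matern hκ φ hμ hx)

lemma pderiv2_zero_maternMonomial {κ : ℝ} (hκ : 0 < κ) (φ : ℝ) {μ : ℝ} (hμ : 0 < μ) (k : ℕ)
    {x : E2} (hx : x ≠ 0) :
    pderiv2 0 (maternMonomial κ φ k μ) x
      = k * maternMonomial κ φ (k - 1) μ x - (2 * μ)⁻¹ * maternMonomial κ φ (k + 1) (μ - 1) x := by
  rw [pderiv2, (hasFDerivAt_maternMonomial hκ φ hμ k hx).fderiv]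
  simp only [maternMonomial, add_apply, smul_apply, smul_eq_mul, coe_innerSL_apply,
    EuclideanSpace.inner_single_right, PiLp.proj_apply, PiLp.single_eq_same, ringHom_apply]
  ring

lemma pderiv2_zero_linear_combination_maternMonomial {κ : ℝ} (hκ : 0 < κ) (φ : ℝ) {μ μ' : ℝ}
    (hμ : 0 < μ) (hμ' : 0 < μ') (a b : ℝ) (k l : ℕ) {x : E2} (hx : x ≠ 0) :
    pderiv2 0 (fun y => a * maternMonomial κ φ k μ y + b * maternMonomial κ φ l μ' y) x
      = a * (k * maternMonomial κ φ (k - 1) μ x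
          - (2 * μ)⁻¹ * maternMonomial κ φ (k + 1) (μ - 1) x)
        + b * (l * maternMonomial κ φ (l - 1) μ' x
          - (2 * μ')⁻¹ * maternMonomial κ φ (l + 1) (μ' - 1) x) := by
  have hk := (hasFDerivAt_maternMonomial hκ φ hμ k hx).differentiableAt
  have hl := (hasFDerivAt_maternMonomial hκ φ hμ' l hx).differentiableAt
  rw [pderiv2_add (hk.const_mul a) (hl.const_mul b), pderiv2_const_mul hk, pderiv2_const_mul hl,
    pderiv2_zero_maternMonomial hκ φ hμ k hx, pderiv2_zero_maternMonomial hκ φ hμ' l hx]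

lemma eqOn_iterate_three_pderiv2_zero_matern {κ : ℝ} (hκ : 0 < κ) (φ : ℝ) {ν : ℝ} (hν : 3 < ν) :
    EqOn ((pderiv2 0)^[3] (matern κ φ ν))
      (fun y => 3 * (2 ^ 2 * (ν * (ν - 1)))⁻¹ * maternMonomial κ φ 1 (ν - 2) y
        + -(2 ^ 3 * (ν * (ν - 1) * (ν - 2)))⁻¹ * maternMonomial κ φ 3 (ν - 3) y) {0}ᶜ := by
  have hν₀ : 0 < ν := by linarith
  have hν₁ : 0 < ν - 1 := by linarith
  have hν₂ : 0 < ν - 2 := by linarith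
  set M := maternMonomial κ φ
  have d1 : EqOn ((pderiv2 0)^[1] (matern κ φ ν)) (fun y => -(2 * ν)⁻¹ * M 1 (ν - 1) y)
      {0}ᶜ := fun x hx => by
    rw [Function.iterate_one, ← maternMonomial_zero, pderiv2_zero_maternMonomial hκ φ hν₀ 0 hx]
    simp [M]
  have d2 : EqOn ((pderiv2 0)^[2] (matern κ φ ν))
      (fun y => -(2 * ν)⁻¹ * M 0 (ν - 1) y + (2 ^ 2 * (ν * (ν - 1)))⁻¹ * M 2 (ν - 2) y) {0}ᶜ :=
    eqOn_iterate_pderiv2_succ isOpen_compl_singleton d1 fun x hx => by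
      rw [pderiv2_const_mul (hasFDerivAt_maternMonomial hκ φ hν₁ 1 hx).differentiableAt,
        pderiv2_zero_maternMonomial hκ φ hν₁ 1 hx, sub_sub]
      norm_num
      ring
  refine eqOn_iterate_pderiv2_succ isOpen_compl_singleton d2 fun x hx => ?_
  rw [pderiv2_zero_linear_combination_maternMonomial hκ φ hν₁ hν₂ _ _ 0 2 hx, sub_sub, sub_sub]
  norm_num
  ring

theorem matern_fourth_partial_general (κ φ ν : ℝ) (hκ : 0 < κ) (hν : 4 < ν)
    (h : EuclideanSpace ℝ (Fin 2)) (hh : h ≠ 0) :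
    (pderiv2 0)^[4] (matern κ φ ν) h
      = 3 * (2 ^ 2 * ∏ i ∈ Finset.range 2, (ν - i))⁻¹ * matern κ φ (ν - 2) h
        - 6 * (2 ^ 3 * ∏ i ∈ Finset.range 3, (ν - i))⁻¹ * h 0 ^ 2 * matern κ φ (ν - 3) h
        + (2 ^ 4 * ∏ i ∈ Finset.range 4, (ν - i))⁻¹ * h 0 ^ 4 * matern κ φ (ν - 4) h := by
  have hν₂ : 0 < ν - 2 := by linarith
  have hν₃ : 0 < ν - 3 := by linarith
  have d4 := eqOn_iterate_pderiv2_succ isOpen_compl_singleton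
    (eqOn_iterate_three_pderiv2_zero_matern hκ φ (by linarith)) fun x hx =>
      pderiv2_zero_linear_combination_maternMonomial hκ φ hν₂ hν₃ _ _ 1 3 hx
  rw [d4 hh]
  simp only [maternMonomial, Finset.prod_range_succ, Finset.prod_range_zero, sub_sub]
  norm_num
  ring

/-- Example 3 with `b₁ = b₂ = 0`, `B₁ = B₂ = (1,0)^⊤`: the fourth partial derivative of the
Matérn covariance with respect to the first coordinate is
`∂⁴C_κ^ν/∂h₁⁴(h) = 3γ₂ C_κ^{ν−2}(h) − 6γ₃ h₁² C_κ^{ν−3}(h) + γ₄ h₁⁴ C_κ^{ν−4}(h)`,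
where `γ_k = (2^k ∏_{i=0}^{k−1}(ν−i))⁻¹`. -/
theorem matern_fourth_partial (κ φ ν : ℝ) (hκ : 0 < κ) (hφ : 0 < φ) (hν : 4 < ν)
    (h : EuclideanSpace ℝ (Fin 2)) (hh : h ≠ 0) :
    (pderiv2 0)^[4] (matern κ φ ν) h
      = 3 * (2 ^ 2 * ∏ i ∈ Finset.range 2, (ν - i))⁻¹ * matern κ φ (ν - 2) h
        - 6 * (2 ^ 3 * ∏ i ∈ Finset.range 3, (ν - i))⁻¹ * h 0 ^ 2 * matern κ φ (ν - 3) h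
        + (2 ^ 4 * ∏ i ∈ Finset.range 4, (ν - i))⁻¹ * h 0 ^ 4 * matern κ φ (ν - 4) h :=
  matern_fourth_partial_general κ φ ν hκ hν h hh
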